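/- Given an integer r ≥ 3, natural numbers n_1, ..., n_r, and nonzero real numbers σ_2, ..., σ_{r-1}, set s_* = 2(n_1 + n_r + 2) and define 𝓘(κ) = ∫_0^{s_*} e^{-κy} y^{n_1} (y - s_*)^{n_r} (y - 2n_1 - 2) ∏_{i=2}^{r-1} (y + σ_i)^{n_i} dy. Then κ^{n_1+1} · 𝓘(κ) tends to n_1! · (-s_*)^{n_r} · (-(2n_1+2)) · ∏_{i=2}^{r-1} σ_i^{n_i} as κ → +∞. In particular, for all sufficiently large κ > 0, the sign of 𝓘(κ) equals the sign of (-1)^{n_r+1} · ∏_{i=2}^{r-1} σ_i^{n_i}. -/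

import Mathlib

/-!
Watson's lemma at order zero: after the substitution `u = κ y`, the weight
`κ^{m+1} e^{-κ y} y^m` on `[0, s]` becomes the truncated Gamma density `e^{-u} u^m` on
`[0, κ s]`, whose mass tends to `m!`. For `g` Lipschitz on `[0, s]` the error
`g y - g 0 = O(y)` costs one more power of `y`, hence a factor `1/κ`, so
`κ^{m+1} ∫_0^s e^{-κy} y^m g(y) dy → m! g(0)`. With `g` the remaining polynomial factor of the
integrand, `g(0) = (-s_*)^{n_r} (-(2n_1+2)) ∏ σ_i^{n_i}`, which is nonzero and has the sign of
`(-1)^{n_r+1} ∏ σ_i^{n_i}`.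
-/

open MeasureTheory Real Filter Set Topology

namespace Real

lemma sign_mul_of_pos {c : ℝ} (hc : 0 < c) (x : ℝ) : sign (c * x) = sign x := by
  obtain hx | rfl | hx := lt_trichotomy x 0
  · rw [sign_of_neg (mul_neg_of_pos_of_neg hc hx), sign_of_neg hx]
  · rw [mul_zero]
  · rw [sign_of_pos (mul_pos hc hx), sign_of_pos hx]

end Real

lemma Filter.Tendsto.eventually_sign_eq {α : Type*} {l : Filter α} {u : α → ℝ} {L : ℝ}
    (hu : Tendsto u l (𝓝 L)) (hL : L ≠ 0) : ∀ᶠ x in l, sign (u x) = sign L := by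
  obtain hL | hL := hL.lt_or_gt
  · filter_upwards [hu.eventually_lt_const hL] with x hx
    rw [sign_of_neg hx, sign_of_neg hL]
  · filter_upwards [hu.eventually_const_lt hL] with x hx
    rw [sign_of_pos hx, sign_of_pos hL]

section Watson

variable (m : ℕ)

lemma integrableOn_exp_neg_mul_pow_Ioi :
    IntegrableOn (fun x : ℝ => exp (-x) * x ^ m) (Ioi 0) := by
  refine (GammaIntegral_convergent (s := (m : ℝ) + 1) (by positivity)).congr_fun
    (fun x _ => ?_) measurableSet_Ioi
  simp only [add_sub_cancel_right, rpow_natCast]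

lemma integral_exp_neg_mul_pow_Ioi :
    ∫ x in Ioi (0 : ℝ), exp (-x) * x ^ m = m.factorial := by
  rw [← Gamma_nat_eq_factorial, Gamma_eq_integral (by positivity)]
  simp only [add_sub_cancel_right, rpow_natCast]

lemma pow_succ_mul_integral_exp_neg_mul_pow (s κ : ℝ) :
    κ ^ (m + 1) * ∫ y in (0 : ℝ)..s, exp (-κ * y) * y ^ m
      = ∫ u in (0 : ℝ)..κ * s, exp (-u) * u ^ m := by
  have h := intervalIntegral.smul_integral_comp_mul_left (fun u : ℝ => exp (-u) * u ^ m) κ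
    (a := 0) (b := s)
  rw [mul_zero] at h
  rw [← h, smul_eq_mul, ← intervalIntegral.integral_const_mul,
    ← intervalIntegral.integral_const_mul]
  refine intervalIntegral.integral_congr fun y _ => ?_
  simp only [neg_mul, mul_pow]
  ring

lemma tendsto_pow_succ_mul_integral_exp_neg_mul_pow {s : ℝ} (hs : 0 < s) :
    Tendsto (fun κ : ℝ => κ ^ (m + 1) * ∫ y in (0 : ℝ)..s, exp (-κ * y) * y ^ m)
      atTop (𝓝 m.factorial) := by
  have h := intervalIntegral_tendsto_integral_Ioi 0 (integrableOn_exp_neg_mul_pow_Ioi m)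
    (tendsto_id.atTop_mul_const hs)
  rw [integral_exp_neg_mul_pow_Ioi] at h
  exact h.congr fun κ => (pow_succ_mul_integral_exp_neg_mul_pow m s κ).symm

lemma integral_exp_neg_mul_pow_le {s κ : ℝ} (hs : 0 ≤ s) (hκ : 0 < κ) :
    ∫ y in (0 : ℝ)..s, exp (-κ * y) * y ^ m ≤ m.factorial / κ ^ (m + 1) := by
  rw [le_div_iff₀' (by positivity), pow_succ_mul_integral_exp_neg_mul_pow,
    ← integral_exp_neg_mul_pow_Ioi, intervalIntegral.integral_of_le (by positivity)]
  refine setIntegral_mono_set (integrableOn_exp_neg_mul_pow_Ioi m) ?_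
    Ioc_subset_Ioi_self.eventuallyLE
  filter_upwards [ae_restrict_mem measurableSet_Ioi] with x (hx : 0 < x)
  positivity

variable {m} {s : ℝ} {g : ℝ → ℝ} {K : NNReal}

lemma tendsto_pow_succ_mul_integral_exp_neg_mul_pow_mul_sub (hs : 0 ≤ s)
    (hg : LipschitzOnWith K g (Icc 0 s)) :
    Tendsto (fun κ : ℝ => κ ^ (m + 1) *
        ∫ y in (0 : ℝ)..s, exp (-κ * y) * y ^ m * (g y - g 0)) atTop (𝓝 0) := by
  refine squeeze_zero_norm' ?_ ((tendsto_const_nhds (x := (K : ℝ) * (m + 1).factorial)).div_atTop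
    tendsto_id)
  filter_upwards [eventually_gt_atTop 0] with κ hκ
  have hpointwise : ∀ y ∈ Ioc 0 s,
      ‖exp (-κ * y) * y ^ m * (g y - g 0)‖ ≤ K * (exp (-κ * y) * y ^ (m + 1)) := by
    intro y hy
    have hy0 : 0 < y := hy.1
    have hlip : |g y - g 0| ≤ K * y := by
      simpa [Real.dist_eq, abs_of_pos hy0] using
        hg.dist_le_mul y (Ioc_subset_Icc_self hy) 0 (left_mem_Icc.2 hs)
    rw [norm_mul, norm_mul, norm_of_nonneg (exp_pos _).le, norm_of_nonneg (by positivity),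
      Real.norm_eq_abs, pow_succ]
    nlinarith [mul_le_mul_of_nonneg_left hlip (by positivity : 0 ≤ exp (-κ * y) * y ^ m)]
  have hbound := intervalIntegral.norm_integral_le_of_norm_le (μ := volume) hs
    (Eventually.of_forall hpointwise) (Continuous.intervalIntegrable (by fun_prop) _ _)
  rw [intervalIntegral.integral_const_mul] at hbound
  calc ‖κ ^ (m + 1) * ∫ y in (0 : ℝ)..s, exp (-κ * y) * y ^ m * (g y - g 0)‖
      ≤ κ ^ (m + 1) * (K * ((m + 1).factorial / κ ^ (m + 2))) := by
        rw [norm_mul, norm_of_nonneg (by positivity)]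
        gcongr
        exact hbound.trans (by gcongr; exact integral_exp_neg_mul_pow_le (m + 1) hs hκ)
    _ = K * (m + 1).factorial / κ := by
        field_simp
        ring

theorem tendsto_pow_succ_mul_integral_exp_neg_mul_pow_mul (hs : 0 < s)
    (hg : LipschitzOnWith K g (Icc 0 s)) :
    Tendsto (fun κ : ℝ => κ ^ (m + 1) * ∫ y in (0 : ℝ)..s, exp (-κ * y) * y ^ m * g y)
      atTop (𝓝 (m.factorial * g 0)) := by
  have hgc : ContinuousOn g (uIcc 0 s) := uIcc_of_le hs.le ▸ hg.continuousOn
  have hsplit : ∀ κ : ℝ, κ ^ (m + 1) * ∫ y in (0 : ℝ)..s, exp (-κ * y) * y ^ m * g y =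
      (κ ^ (m + 1) * ∫ y in (0 : ℝ)..s, exp (-κ * y) * y ^ m) * g 0 +
        κ ^ (m + 1) * ∫ y in (0 : ℝ)..s, exp (-κ * y) * y ^ m * (g y - g 0) := by
    intro κ
    rw [mul_assoc, ← intervalIntegral.integral_mul_const, ← mul_add,
      ← intervalIntegral.integral_add (by apply Continuous.intervalIntegrable; fun_prop)
        (ContinuousOn.intervalIntegrable (by fun_prop))]
    simp only [mul_sub, add_sub_cancel]
  simpa only [← hsplit, add_zero] using
    ((tendsto_pow_succ_mul_integral_exp_neg_mul_pow m hs).mul_const (g 0)).add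
      (tendsto_pow_succ_mul_integral_exp_neg_mul_pow_mul_sub (m := m) hs.le hg)

end Watson

theorem stmt_4_general (r : ℕ) (n : ℕ → ℕ) (σ : ℕ → ℝ)
    (hσ : ∀ i ∈ Finset.Icc 2 (r - 1), σ i ≠ 0)
    (sstar : ℝ) (hsstar : sstar = 2 * ((n 1 : ℝ) + (n r : ℝ) + 2))
    (I : ℝ → ℝ)
    (hI : ∀ κ, I κ = ∫ y in (0:ℝ)..sstar,
        Real.exp (-κ * y) * y ^ n 1 * (y - sstar) ^ n r * (y - 2 * (n 1 : ℝ) - 2) *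
          ∏ i ∈ Finset.Icc 2 (r - 1), (y + σ i) ^ n i) :
    Filter.Tendsto (fun κ : ℝ => κ ^ (n 1 + 1) * I κ) Filter.atTop
      (nhds ((Nat.factorial (n 1) : ℝ) * (-sstar) ^ n r * (-(2 * (n 1 : ℝ) + 2)) *
        ∏ i ∈ Finset.Icc 2 (r - 1), σ i ^ n i)) ∧
    ∀ᶠ κ : ℝ in Filter.atTop,
      Real.sign (I κ) =
        Real.sign ((-1) ^ (n r + 1) * ∏ i ∈ Finset.Icc 2 (r - 1), σ i ^ n i) := by
  set P := ∏ i ∈ Finset.Icc 2 (r - 1), σ i ^ n i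
  have hs : 0 < sstar := by rw [hsstar]; positivity
  set g : ℝ → ℝ := fun y =>
    (y - sstar) ^ n r * (y - 2 * (n 1 : ℝ) - 2) * ∏ i ∈ Finset.Icc 2 (r - 1), (y + σ i) ^ n i
  obtain ⟨K, hK⟩ : ∃ K, LipschitzOnWith K g (Icc 0 sstar) :=
    (ContDiff.locallyLipschitz (𝕂 := ℝ) (by fun_prop)).locallyLipschitzOn
      |>.exists_lipschitzOnWith_of_compact isCompact_Icc
  have hlim : Tendsto (fun κ : ℝ => κ ^ (n 1 + 1) * I κ) atTop
      (𝓝 ((n 1).factorial * (-sstar) ^ n r * (-(2 * (n 1 : ℝ) + 2)) * P)) := by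
    have hg0 : g 0 = (-sstar) ^ n r * (-(2 * (n 1 : ℝ) + 2)) * P := by
      simp only [g, P, zero_sub, zero_add]
      ring
    rw [show (n 1).factorial * (-sstar) ^ n r * (-(2 * (n 1 : ℝ) + 2)) * P
        = (n 1).factorial * g 0 by rw [hg0]; ring]
    refine (tendsto_pow_succ_mul_integral_exp_neg_mul_pow_mul hs hK).congr fun κ => ?_
    simp only [hI, g, mul_assoc]
  have hP : P ≠ 0 := Finset.prod_ne_zero_iff.2 fun i hi => pow_ne_zero _ (hσ i hi)
  have hc : 0 < (n 1).factorial * sstar ^ n r * (2 * (n 1 : ℝ) + 2) := by positivity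
  have hL : (n 1).factorial * (-sstar) ^ n r * (-(2 * (n 1 : ℝ) + 2)) * P
      = (n 1).factorial * sstar ^ n r * (2 * (n 1 : ℝ) + 2) * ((-1) ^ (n r + 1) * P) := by
    rw [neg_pow, pow_succ]
    ring
  refine ⟨hlim, ?_⟩
  filter_upwards [hlim.eventually_sign_eq (by rw [hL]; positivity), eventually_gt_atTop 0]
    with κ hsign hκ
  rwa [sign_mul_of_pos (by positivity), hL, sign_mul_of_pos hc] at hsign

/-- Asymptotics (3.27) of the invariant integral `𝓘(κ)` as `κ → +∞`:
`κ^{n₁+1} 𝓘(κ) → n₁! (-s_*)^{n_r} (-(2n₁+2)) ∏ σᵢ^{nᵢ}`, so for large `κ` the sign of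
`𝓘(κ)` is that of `(-1)^{n_r+1} ∏ σᵢ^{nᵢ}`. -/
theorem stmt_4 (r : ℕ) (hr : 3 ≤ r) (n : ℕ → ℕ) (σ : ℕ → ℝ)
    (hσ : ∀ i ∈ Finset.Icc 2 (r - 1), σ i ≠ 0)
    (sstar : ℝ) (hsstar : sstar = 2 * ((n 1 : ℝ) + (n r : ℝ) + 2))
    (I : ℝ → ℝ)
    (hI : ∀ κ, I κ = ∫ y in (0:ℝ)..sstar,
        Real.exp (-κ * y) * y ^ n 1 * (y - sstar) ^ n r * (y - 2 * (n 1 : ℝ) - 2) *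
          ∏ i ∈ Finset.Icc 2 (r - 1), (y + σ i) ^ n i) :
    Filter.Tendsto (fun κ : ℝ => κ ^ (n 1 + 1) * I κ) Filter.atTop
      (nhds ((Nat.factorial (n 1) : ℝ) * (-sstar) ^ n r * (-(2 * (n 1 : ℝ) + 2)) *
        ∏ i ∈ Finset.Icc 2 (r - 1), σ i ^ n i)) ∧
    ∀ᶠ κ : ℝ in Filter.atTop,
      Real.sign (I κ) =
        Real.sign ((-1) ^ (n r + 1) * ∏ i ∈ Finset.Icc 2 (r - 1), σ i ^ n i) :=
  stmt_4_general r n σ hσ sstar hsstar I hI
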